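/- If π ∨ ρ ≠ 1_n in NC(n), then the meandric system M_{π,ρ} is reducible, i.e., there exists a proper subinterval of {1,...,2n} invariant under M_{π,ρ}. -/

import Mathlib

open scoped Classical

/-- A setoid (partition) of `Fin n` is non-crossing if there is no crossing
`a < b < c < d` with `a ∼ c`, `b ∼ d` but `a` and `b` in distinct blocks. -/
def IsNC {n : ℕ} (S : Setoid (Fin n)) : Prop :=
  ∀ a b c d : Fin n, a < b → b < c → c < d → S.r a c → S.r b d → S.r a b

/-- A partition is a pairing if every block has exactly two elements. -/
def IsPairing {m : ℕ} (T : Setoid (Fin m)) : Prop :=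
  ∀ x : Fin m, ∃ y : Fin m, y ≠ x ∧ T.r x y ∧ ∀ z : Fin m, T.r x z → z = x ∨ z = y

/-- The block of `i` in the partition `S`, as a finset. -/
noncomputable def blockOf {n : ℕ} (S : Setoid (Fin n)) (i : Fin n) : Finset (Fin n) :=
  Finset.univ.filter (fun j => S.r i j)

lemma blockOf_nonempty {n : ℕ} (S : Setoid (Fin n)) (i : Fin n) :
    (blockOf S i).Nonempty :=
  ⟨i, by simp [blockOf, S.iseqv.refl i]⟩

/-- The permutation `P_S` which performs an increasing cycle on every block of `S`:
it sends `i` to the next larger element of its block, or to the minimum of the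
block if `i` is the largest element of its block. -/
noncomputable def nextP {n : ℕ} (S : Setoid (Fin n)) (i : Fin n) : Fin n :=
  if h : ((blockOf S i).filter (fun j => i < j)).Nonempty
  then ((blockOf S i).filter (fun j => i < j)).min' h
  else (blockOf S i).min' (blockOf_nonempty S i)

/-- The inverse permutation `P_S⁻¹` (decreasing cycle on every block of `S`). -/
noncomputable def prevP {n : ℕ} (S : Setoid (Fin n)) (i : Fin n) : Fin n :=
  if h : ((blockOf S i).filter (fun j => j < i)).Nonempty
  then ((blockOf S i).filter (fun j => j < i)).max' h
  else (blockOf S i).max' (blockOf_nonempty S i)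

/-- `0`-indexed version of the point `2i-1` of `{1,…,2n}`. -/
def dEven {n : ℕ} (j : Fin n) : Fin (2*n) := ⟨2*j.val, by have := j.isLt; omega⟩

/-- `0`-indexed version of the point `2i` of `{1,…,2n}`. -/
def dOdd {n : ℕ} (j : Fin n) : Fin (2*n) := ⟨2*j.val+1, by have := j.isLt; omega⟩

/-- The doubling construction `π ↦ A(π)`: the pairing of `{1,…,2n}` generated by
pairing each point `2i` with `2P_π(i) - 1`, so that the associated permutation
satisfies `P_{A(π)}(2i) = 2P_π(i) - 1` and `P_{A(π)}(2i-1) = 2P_π⁻¹(i)`. -/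
noncomputable def archSetoid {n : ℕ} (S : Setoid (Fin n)) : Setoid (Fin (2*n)) :=
  Relation.EqvGen.setoid (fun a b => ∃ j : Fin n, a = dOdd j ∧ b = dEven (nextP S j))

/-- The meandric system permutation `M_{π,ρ} ∈ S_{2n}`, defined by
`M_{π,ρ}(2i-1) = 2P_π⁻¹(i)` and `M_{π,ρ}(2i) = 2P_ρ(i) - 1` (here `0`-indexed). -/
noncomputable def meanderMap {n : ℕ} (π ρ : Setoid (Fin n)) (x : Fin (2*n)) : Fin (2*n) :=
  if x.val % 2 = 0
  then dOdd (prevP π ⟨x.val / 2, by have := x.isLt; omega⟩)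
  else dEven (nextP ρ ⟨x.val / 2, by have := x.isLt; omega⟩)

/-- The orbit partition of a map. -/
def orbitSetoid {m : ℕ} (f : Fin m → Fin m) : Setoid (Fin m) :=
  Relation.EqvGen.setoid (fun a b => f a = b)

/-- Number of orbits of a map. -/
noncomputable def numOrbits {m : ℕ} (f : Fin m → Fin m) : ℕ :=
  Nat.card (Quotient (orbitSetoid f))

/-- `S` is a union of blocks of the partition `T`. -/
def IsBlockUnion {m : ℕ} (T : Setoid (Fin m)) (S : Set (Fin m)) : Prop :=
  ∀ x ∈ S, ∀ y, T.r x y → y ∈ S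

/-- `S` is invariant under `f`. -/
def MInvariant {m : ℕ} (f : Fin m → Fin m) (S : Set (Fin m)) : Prop :=
  ∀ x ∈ S, f x ∈ S

/-- The meandric system `M_{π,ρ}` is reducible: some proper subinterval
`{a,…,b}` of `{1,…,2n}` is invariant under `M_{π,ρ}`. -/
noncomputable def Reducible {n : ℕ} (π ρ : Setoid (Fin n)) : Prop :=
  ∃ a b : Fin (2*n), a ≤ b ∧ b.val - a.val < 2*n - 1 ∧
    MInvariant (meanderMap π ρ) {x | a ≤ x ∧ x ≤ b}

/-- The join in the lattice of non-crossing partitions: the smallest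
non-crossing partition above both `π` and `ρ`. -/
noncomputable def ncJoin {m : ℕ} (π ρ : Setoid (Fin m)) : Setoid (Fin m) :=
  sInf {τ | IsNC τ ∧ π ≤ τ ∧ ρ ≤ τ}

/-- The moment-cumulant formula of free probability: `mom n` is the sum over all
non-crossing partitions of `{1,…,n}` of the products of cumulants `κ` indexed
by the block sizes.  This uniquely determines the free cumulants `κ n`, `n ≥ 1`,
of a sequence of moments. -/
def MomCum {F : Type*} [Field F] (mom κ : ℕ → F) : Prop :=
  ∀ n : ℕ, 0 < n →
    mom n = ∑ᶠ S ∈ {S : Setoid (Fin n) | IsNC S}, ∏ᶠ B ∈ Setoid.classes S, κ B.ncard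

/-- The number of irreducible meandric systems on `2k` bridges, described as the
number of pairs `(π,ρ) ∈ NC(k)²` with `π ∨ ρ = 1_k`, `π ∧ ρ = 0_k`. -/
noncomputable def mirr (k : ℕ) : ℕ :=
  Nat.card {pr : Setoid (Fin k) × Setoid (Fin k) //
    IsNC pr.1 ∧ IsNC pr.2 ∧ ncJoin pr.1 pr.2 = ⊤ ∧ pr.1 ⊓ pr.2 = ⊥}

/-- The number of pairs `(π,ρ) ∈ NC(n)²` whose meandric system `M_{π,ρ}` has
exactly `k` orbits (connected components). -/
noncomputable def mcount (n k : ℕ) : ℕ :=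
  Nat.card {pr : Setoid (Fin n) × Setoid (Fin n) //
    IsNC pr.1 ∧ IsNC pr.2 ∧ numOrbits (meanderMap pr.1 pr.2) = k}

/-- The number of meanders on `2n` bridges. -/
noncomputable def meanderNum (n : ℕ) : ℕ := mcount n 1

/-
Let `τ = π ∨ ρ` in `NC(n)`. A block of `τ` of minimal span is an interval `{a,…,b}`: a point
strictly between `a` and `b` in another block would, by non-crossingness, have its whole block
nested strictly inside `(a, b)`. Since `τ ≠ 1_n`, this interval is not all of `{1,…,n}`.
As `M_{π,ρ}` maps `2j-1, 2j` to `2i-1` or `2i` with `i` in the `π`- or `ρ`-block of `j`, hence in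
the `τ`-block of `j`, the doubled interval `{2a-1,…,2b}` is invariant and proper.
-/

section Blocks

variable {n : ℕ}

@[simp]
lemma mem_blockOf {S : Setoid (Fin n)} {i j : Fin n} : j ∈ blockOf S i ↔ S.r i j := by
  simp [blockOf]

lemma rel_nextP (S : Setoid (Fin n)) (i : Fin n) : S.r i (nextP S i) := by
  unfold nextP
  split
  · exact mem_blockOf.1 (Finset.mem_filter.1 (Finset.min'_mem _ _)).1
  · exact mem_blockOf.1 (Finset.min'_mem _ _)

lemma rel_prevP (S : Setoid (Fin n)) (i : Fin n) : S.r i (prevP S i) := by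
  unfold prevP
  split
  · exact mem_blockOf.1 (Finset.mem_filter.1 (Finset.max'_mem _ _)).1
  · exact mem_blockOf.1 (Finset.max'_mem _ _)

noncomputable def blockMin (S : Setoid (Fin n)) (i : Fin n) : Fin n :=
  (blockOf S i).min' (blockOf_nonempty S i)

noncomputable def blockMax (S : Setoid (Fin n)) (i : Fin n) : Fin n :=
  (blockOf S i).max' (blockOf_nonempty S i)

lemma rel_blockMin (S : Setoid (Fin n)) (i : Fin n) : S.r i (blockMin S i) :=
  mem_blockOf.1 (Finset.min'_mem _ _)

lemma rel_blockMax (S : Setoid (Fin n)) (i : Fin n) : S.r i (blockMax S i) :=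
  mem_blockOf.1 (Finset.max'_mem _ _)

lemma blockMin_le {S : Setoid (Fin n)} {i j : Fin n} (h : S.r i j) : blockMin S i ≤ j :=
  Finset.min'_le _ _ (mem_blockOf.2 h)

lemma le_blockMax {S : Setoid (Fin n)} {i j : Fin n} (h : S.r i j) : j ≤ blockMax S i :=
  Finset.le_max' _ _ (mem_blockOf.2 h)

lemma isBlockUnion_of_forall_rel_iff {S : Setoid (Fin n)} {i : Fin n} {B : Set (Fin n)}
    (hB : ∀ x, S.r i x ↔ x ∈ B) : IsBlockUnion S B :=
  fun x hx y hxy => (hB y).1 (S.trans ((hB x).2 hx) hxy)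

lemma val_sub_lt_of_forall_rel_iff_Icc {S : Setoid (Fin n)} (hS : S ≠ ⊤) {i a b : Fin n}
    (hB : ∀ x, S.r i x ↔ x ∈ Set.Icc a b) : b.val - a.val < n - 1 := by
  by_contra hspan
  refine hS (Setoid.eq_top_iff.2 fun x y => S.trans (S.symm ((hB x).2 ?_)) ((hB y).2 ?_))
    <;> exact ⟨Fin.le_def.2 (by omega), Fin.le_def.2 (by omega)⟩

end Blocks

section NonCrossing

variable {n : ℕ}

lemma isNC_sInf {s : Set (Setoid (Fin n))} (hs : ∀ τ ∈ s, IsNC τ) : IsNC (sInf s) :=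
  fun a b c d hab hbc hcd hac hbd τ hτ =>
    hs τ hτ a b c d hab hbc hcd (hac τ hτ) (hbd τ hτ)

lemma isNC_ncJoin (π ρ : Setoid (Fin n)) : IsNC (ncJoin π ρ) :=
  isNC_sInf fun _ hτ => hτ.1

lemma le_ncJoin_left (π ρ : Setoid (Fin n)) : π ≤ ncJoin π ρ :=
  le_sInf fun _ hτ => hτ.2.1

lemma le_ncJoin_right (π ρ : Setoid (Fin n)) : ρ ≤ ncJoin π ρ :=
  le_sInf fun _ hτ => hτ.2.2

lemma IsNC.mem_Ioo_of_rel {τ : Setoid (Fin n)} (hτ : IsNC τ) {a b x y : Fin n}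
    (hax : a < x) (hxb : x < b) (hab : τ.r a b) (hnax : ¬ τ.r a x) (hxy : τ.r x y) :
    y ∈ Set.Ioo a b := by
  refine ⟨?_, ?_⟩
  · rcases lt_trichotomy y a with hya | rfl | hay
    · exact absurd (τ.trans (τ.symm (hτ y a x b hya hax hxb (τ.symm hxy) hab)) (τ.symm hxy))
        hnax
    · exact absurd (τ.symm hxy) hnax
    · exact hay
  · rcases lt_trichotomy y b with hyb | rfl | hby
    · exact hyb
    · exact absurd (τ.trans hab (τ.symm hxy)) hnax
    · exact absurd (hτ a x b y hax hxb hby hab hxy) hnax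

lemma IsNC.exists_block_eq_Icc {τ : Setoid (Fin n)} (hτ : IsNC τ) (hn : 0 < n) :
    ∃ i a b : Fin n, ∀ x, τ.r i x ↔ x ∈ Set.Icc a b := by
  obtain ⟨i, -, hmin⟩ := Finset.exists_min_image Finset.univ
    (fun i => (blockMax τ i : ℕ) - blockMin τ i) ⟨⟨0, hn⟩, Finset.mem_univ _⟩
  refine ⟨i, blockMin τ i, blockMax τ i, fun x => ⟨fun hix => ⟨blockMin_le hix, le_blockMax hix⟩,
    fun ⟨hax, hxb⟩ => by_contra fun hix => ?_⟩⟩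
  have hai := rel_blockMin τ i
  have hbi := rel_blockMax τ i
  have hnax : ¬ τ.r (blockMin τ i) x := fun h => hix (τ.trans hai h)
  have hax' : blockMin τ i < x := hax.lt_of_ne fun h => hnax (h ▸ τ.refl _)
  have hxb' : x < blockMax τ i :=
    hxb.lt_of_ne fun h => hnax (h ▸ τ.trans (τ.symm hai) hbi)
  have nested : ∀ y, τ.r x y → y ∈ Set.Ioo (blockMin τ i) (blockMax τ i) :=
    fun _ => hτ.mem_Ioo_of_rel hax' hxb' (τ.trans (τ.symm hai) hbi) hnax
  have hminx := nested _ (rel_blockMin τ x)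
  have hmaxx := nested _ (rel_blockMax τ x)
  have hlo : blockMin τ x ≤ x := blockMin_le (τ.refl x)
  have hhi : x ≤ blockMax τ x := le_blockMax (τ.refl x)
  have hwidth := hmin x (Finset.mem_univ x)
  simp only [Set.mem_Ioo, Fin.lt_def, Fin.le_def] at hminx hmaxx hlo hhi
  omega

end NonCrossing

section Meander

variable {n : ℕ}

/-- The point `j` of `{1,…,n}` with `x ∈ {2j-1, 2j}`. -/
def halfIdx (x : Fin (2 * n)) : Fin n := ⟨x.val / 2, by omega⟩

lemma rel_halfIdx_meanderMap {π ρ τ : Setoid (Fin n)} (hπ : π ≤ τ) (hρ : ρ ≤ τ)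
    (x : Fin (2 * n)) : τ.r (halfIdx x) (halfIdx (meanderMap π ρ x)) := by
  unfold meanderMap
  split
  · convert hπ (rel_prevP π (halfIdx x)) using 1
    ext
    simp only [halfIdx, dOdd]
    omega
  · convert hρ (rel_nextP ρ (halfIdx x)) using 1
    ext
    simp only [halfIdx, dEven]
    omega

lemma mInvariant_preimage_halfIdx {π ρ τ : Setoid (Fin n)} (hπ : π ≤ τ) (hρ : ρ ≤ τ)
    {S : Set (Fin n)} (hS : IsBlockUnion τ S) :
    MInvariant (meanderMap π ρ) (halfIdx ⁻¹' S) :=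
  fun x hx => hS _ hx _ (rel_halfIdx_meanderMap hπ hρ x)

lemma preimage_halfIdx_Icc (a b : Fin n) :
    halfIdx ⁻¹' Set.Icc a b = {x | dEven a ≤ x ∧ x ≤ dOdd b} := by
  ext x
  simp only [Set.mem_preimage, Set.mem_Icc, Set.mem_ofPred_eq, Fin.le_def, halfIdx, dEven, dOdd]
  omega

end Meander

theorem reducible_of_ncJoin_ne_top_general (n : ℕ) (π ρ : Setoid (Fin n))
    (h : ncJoin π ρ ≠ ⊤) :
    Reducible π ρ := by
  have hn : 0 < n := by
    refine Nat.pos_of_ne_zero fun hn => h ?_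
    subst hn
    exact Setoid.eq_top_iff.2 fun x => x.elim0
  obtain ⟨i, a, b, hblock⟩ := (isNC_ncJoin π ρ).exists_block_eq_Icc hn
  have hab : a ≤ b := Set.nonempty_Icc.1 ⟨i, (hblock i).1 ((ncJoin π ρ).refl i)⟩
  have hproper := val_sub_lt_of_forall_rel_iff_Icc h hblock
  refine ⟨dEven a, dOdd b, ?_, ?_, ?_⟩
  · simp only [dEven, dOdd, Fin.le_def] at hab ⊢
    omega
  · simp only [dEven, dOdd]
    omega
  · rw [← preimage_halfIdx_Icc]
    exact mInvariant_preimage_halfIdx (le_ncJoin_left π ρ) (le_ncJoin_right π ρ)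
      (isBlockUnion_of_forall_rel_iff hblock)

/-- If `π ∨ ρ ≠ 1_n` in `NC(n)` then `M_{π,ρ}` is reducible. -/
theorem reducible_of_ncJoin_ne_top (n : ℕ) (π ρ : Setoid (Fin n))
    (hπ : IsNC π) (hρ : IsNC ρ) (h : ncJoin π ρ ≠ ⊤) :
    Reducible π ρ :=
  reducible_of_ncJoin_ne_top_general n π ρ h
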